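/- arXiv:2510.09336 — 4 statements merged into one kernel-verified Lean document; each statement's English description precedes it below -/
import Mathlib

section
/- Let q > 0, let a < b be real numbers with d(a,b;q^i) ≠ 0 for i = 0,…,n−1, and let B^n_k(·;q) denote the quantum trigonometric Bernstein basis functions of degree n on [a,b] (and B^{n−1}_k(·;q) those of degree n−1 on [a,b], with the conventions B^{n−1}_{−1} = 0 and B^{n−1}_n = 0). Then for every k with 0 ≤ k ≤ n and every real x, B^n_k(x;q) = q^{n−k}·(d(a,x;q^{k−1})/d(a,b;q^{n−1}))·B^{n−1}_{k−1}(x;q) + (d(x,b;q^{n−k−1})/d(a,b;q^{n−1}))·B^{n−1}_k(x;q). -/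
/-- `d(x,y;c) = ((c+1)/2)·sin(y−x) + ((c−1)/2)·sin(y+x)`. -/
noncomputable def dq (x y c : ℝ) : ℝ :=
  (c + 1) / 2 * Real.sin (y - x) + (c - 1) / 2 * Real.sin (y + x)

/-- The q-integer `[k]_q = 1 + q + ⋯ + q^{k−1}`. -/
noncomputable def qInt (q : ℝ) (k : ℕ) : ℝ := ∑ i ∈ Finset.range k, q ^ i

/-- The q-factorial `[k]_q!`. -/
noncomputable def qFact (q : ℝ) : ℕ → ℝ
  | 0 => 1
  | k + 1 => qInt q (k + 1) * qFact q k

/-- The q-binomial coefficient `[n choose k]_q`. -/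
noncomputable def qBinom (q : ℝ) (n k : ℕ) : ℝ :=
  qFact q n / (qFact q k * qFact q (n - k))

/-- Quantum trigonometric Bernstein basis function `B^n_k(x;q)` on `[a,b]`. -/
noncomputable def qBern (q a b : ℝ) (n k : ℕ) (x : ℝ) : ℝ :=
  qBinom q n k *
    ((∏ i ∈ Finset.range k, dq a x (q ^ i)) * ∏ i ∈ Finset.range (n - k), dq x b (q ^ i)) /
    ∏ i ∈ Finset.range n, dq a b (q ^ i)

/-- A matrix is totally positive if all its minors are nonnegative. -/
def IsTotallyPositive {p r : ℕ} (M : Matrix (Fin p) (Fin r) ℝ) : Prop :=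
  ∀ (k : ℕ) (f : Fin k → Fin p) (g : Fin k → Fin r),
    StrictMono f → StrictMono g → 0 ≤ (M.submatrix f g).det

/-- A system of functions is totally positive on `I` if all its collocation matrices at
increasing points of `I` are totally positive. -/
def IsTotallyPositiveSystem (I : Set ℝ) {n : ℕ} (φ : Fin n → ℝ → ℝ) : Prop :=
  ∀ (m : ℕ) (x : Fin (m + 1) → ℝ), StrictMono x → (∀ j, x j ∈ I) →
    IsTotallyPositive (Matrix.of fun i j => φ i (x j))

/-- Number of sign changes between consecutive entries of a list. -/
noncomputable def signChanges : List ℝ → ℕ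
  | [] => 0
  | [_] => 0
  | a :: b :: t => (if a * b < 0 then 1 else 0) + signChanges (b :: t)

/-- `S⁻(v)`: the number of strict sign changes of a finite real sequence, i.e. the number
of sign changes after deleting all zero entries. -/
noncomputable def strictSignChanges (v : List ℝ) : ℕ :=
  signChanges (v.filter fun x => x ≠ 0)

/-- Rational quantum trigonometric Bernstein basis function `R^n_k(x;q)` with weights `w`. -/
noncomputable def rqBern (q a b : ℝ) (n : ℕ) (w : Fin (n + 1) → ℝ) (k : Fin (n + 1)) (x : ℝ) : ℝ :=
  w k * qBern q a b n k x / ∑ i : Fin (n + 1), w i * qBern q a b n i x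

lemma qInt_pos {q : ℝ} (hq : 0 < q) (k : ℕ) : 0 < qInt q (k + 1) := by
  unfold qInt
  exact Finset.sum_pos (fun i _ => pow_pos hq i) (by simp)

lemma qFact_pos {q : ℝ} (hq : 0 < q) (k : ℕ) : 0 < qFact q k := by
  induction k with
  | zero => norm_num [qFact]
  | succ k ih => exact mul_pos (qInt_pos hq k) ih

lemma qInt_add (q : ℝ) (a b : ℕ) : qInt q (a + b) = qInt q a + q ^ a * qInt q b := by
  unfold qInt
  rw [Finset.sum_range_add, Finset.mul_sum]
  simp [pow_add]

lemma qBinom_pascal {q : ℝ} (hq : 0 < q) (m j : ℕ) (h : j + 1 ≤ m) :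
    qBinom q (m + 1) (j + 1) = q ^ (m - j) * qBinom q m j + qBinom q m (j + 1) := by
  obtain ⟨t, rfl⟩ : ∃ t, m = j + 1 + t := ⟨m - (j + 1), by omega⟩
  have e1 : j + 1 + t + 1 - (j + 1) = t + 1 := by omega
  have e2 : j + 1 + t - j = t + 1 := by omega
  have e3 : j + 1 + t - (j + 1) = t := by omega
  have e4 : j + 1 + t + 1 = (t + 1) + (j + 1) := by omega
  unfold qBinom
  rw [e1, e2, e3, e4]
  have hfj := (qFact_pos hq j).ne'
  have hft := (qFact_pos hq t).ne'
  have hij := (qInt_pos hq j).ne'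
  have hit := (qInt_pos hq t).ne'
  rw [show qFact q (t + 1 + (j + 1)) = qInt q (t + 1 + (j + 1)) * qFact q (t + j + 1) from by
        rw [show t + 1 + (j + 1) = (t + j + 1) + 1 by omega]; rfl,
      qInt_add q (t+1) (j+1),
      show qFact q (j + 1) = qInt q (j + 1) * qFact q j from rfl,
      show qFact q (t + 1) = qInt q (t + 1) * qFact q t from rfl,
      show j + 1 + t = t + j + 1 by omega]
  field_simp
  ring

/-- Recurrence relation (7) for quantum trigonometric Bernstein basis functions, with the
conventions `B^{n-1}_{-1} = 0` and `B^{n-1}_n = 0`. -/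
theorem qBern_recurrence_one (n : ℕ) (hn : 1 ≤ n) (q a b : ℝ) (hq : 0 < q) (hab : a < b)
    (hd : ∀ i < n, dq a b (q ^ i) ≠ 0) (k : ℕ) (hk : k ≤ n) (x : ℝ) :
    qBern q a b n k x =
      q ^ (n - k) * (dq a x (q ^ ((k : ℤ) - 1)) / dq a b (q ^ ((n : ℤ) - 1))) *
        (if k = 0 then 0 else qBern q a b (n - 1) (k - 1) x) +
      dq x b (q ^ ((n : ℤ) - (k : ℤ) - 1)) / dq a b (q ^ ((n : ℤ) - 1)) *
        (if k = n then 0 else qBern q a b (n - 1) k x) := by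
  obtain ⟨m, rfl⟩ : ∃ m, n = m + 1 := ⟨n - 1, by omega⟩
  have hzn : q ^ (((m + 1 : ℕ) : ℤ) - 1) = q ^ m := by
    push_cast
    rw [add_sub_cancel_right, zpow_natCast]
  have hDm : dq a b (q ^ m) ≠ 0 := hd m (by omega)
  have hP : (∏ i ∈ Finset.range m, dq a b (q ^ i)) ≠ 0 :=
    Finset.prod_ne_zero_iff.mpr fun i hi => hd i (by simp only [Finset.mem_range] at hi; omega)
  have hfm : qFact q m ≠ 0 := (qFact_pos hq m).ne'
  have hqi : ∀ s : ℕ, qInt q (s + 1) ≠ 0 := fun s => (qInt_pos hq s).ne'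
  simp only [Nat.add_sub_cancel, hzn]
  by_cases hk0 : k = 0
  · subst hk0
    have hz2 : q ^ (((m + 1 : ℕ) : ℤ) - (0 : ℕ) - 1) = q ^ m := by
      push_cast; rw [sub_zero, add_sub_cancel_right, zpow_natCast]
    simp only [if_pos rfl, mul_zero, zero_add, hz2, if_neg (by omega : ¬ (0 : ℕ) = m + 1)]
    unfold qBern qBinom
    simp only [Nat.sub_zero, Finset.range_zero, Finset.prod_empty, one_mul,
      Finset.prod_range_succ, qFact]
    have h1 : qInt q (1 + m) ≠ 0 := by rw [Nat.add_comm]; exact hqi m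
    field_simp
    rw [if_pos trivial, mul_zero, zero_add, div_eq_iff (hqi m)]
    ring
  · by_cases hkn : k = m + 1
    · subst hkn
      have hz3 : q ^ ((m + 1 : ℕ) - (m + 1)) = (1 : ℝ) := by simp
      simp only [if_pos rfl, if_true, mul_zero, add_zero, if_neg hk0, hzn, hz3,
        Nat.add_sub_cancel, Nat.sub_self]
      unfold qBern qBinom
      simp only [Nat.sub_self, Finset.range_zero, Finset.prod_empty, mul_one,
        Finset.prod_range_succ, qFact]
      have h1 : qInt q (1 + m) ≠ 0 := by rw [Nat.add_comm]; exact hqi m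
      field_simp
      rw [div_eq_iff (hqi m)]
      ring
    · obtain ⟨j, rfl⟩ : ∃ j, k = j + 1 := ⟨k - 1, by omega⟩
      have hjm : j + 1 ≤ m := by omega
      have hzk : q ^ (((j + 1 : ℕ) : ℤ) - 1) = q ^ j := by
        push_cast; rw [add_sub_cancel_right, zpow_natCast]
      have hzk2 : q ^ (((m + 1 : ℕ) : ℤ) - ((j + 1 : ℕ) : ℤ) - 1) = q ^ (m - (j + 1)) := by
        rw [show ((m + 1 : ℕ) : ℤ) - ((j + 1 : ℕ) : ℤ) - 1 = ((m - (j + 1) : ℕ) : ℤ) by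
          push_cast; omega, zpow_natCast]
      simp only [if_neg hk0, if_neg hkn, hzk, hzk2, Nat.add_sub_cancel]
      unfold qBern
      rw [qBinom_pascal hq m j hjm,
        Finset.prod_range_succ (fun i => dq a b (q ^ i)) m,
        Finset.prod_range_succ (fun i => dq a x (q ^ i)) j,
        show m + 1 - (j + 1) = (m - (j + 1)) + 1 from by omega,
        show m - j = (m - (j + 1)) + 1 from by omega,
        Finset.prod_range_succ (fun i => dq x b (q ^ i)) (m - (j + 1))]
      field_simp
end

section
/- Let q > 0 and let k be an integer with k ≡ 0 (mod 4). Then the quantum trigonometric Bernstein basis functions of degree n on the interval [kπ/2, (k+1)π/2] satisfy, for every i with 0 ≤ i ≤ n and every real x, B^n_i(x;q) = q^{i²−n·i} · [n choose i]_q · (d(kπ/2, x; 1))^i · (d(x, (k+1)π/2; 1))^{n−i}. -/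
/-- For `k ≡ 0 (mod 4)`, the quantum trigonometric Bernstein basis functions on
`[kπ/2, (k+1)π/2]` have the explicit form
`B^n_i(x;q) = q^{i²−ni}·[n choose i]_q·d(kπ/2,x;1)^i·d(x,(k+1)π/2;1)^{n−i}`. -/
theorem qBern_special_interval (n : ℕ) (q : ℝ) (hq : 0 < q) (k : ℤ) (hk : k % 4 = 0)
    (i : ℕ) (hi : i ≤ n) (x : ℝ) :
    qBern q ((k : ℝ) * Real.pi / 2) (((k : ℝ) + 1) * Real.pi / 2) n i x =
      q ^ ((i : ℤ) ^ 2 - (n : ℤ) * (i : ℤ)) * qBinom q n i *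
        dq ((k : ℝ) * Real.pi / 2) x 1 ^ i *
        dq x (((k : ℝ) + 1) * Real.pi / 2) 1 ^ (n - i) := by
  have hq0 : q ≠ 0 := ne_of_gt hq
  obtain ⟨m, rfl⟩ : ∃ m, k = 4 * m := ⟨k / 4, by omega⟩
  have key1 : ∀ c y : ℝ, dq (((4 * m : ℤ) : ℝ) * Real.pi / 2) y c = c * Real.sin y := by
    intro c y
    have h1 : y - ((4 * m : ℤ) : ℝ) * Real.pi / 2 = y + (-m : ℤ) * (2 * Real.pi) := by
      push_cast; ring
    have h2 : y + ((4 * m : ℤ) : ℝ) * Real.pi / 2 = y + (m : ℤ) * (2 * Real.pi) := by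
      push_cast; ring
    rw [dq, h1, h2, Real.sin_add_int_mul_two_pi, Real.sin_add_int_mul_two_pi]
    ring
  have key2 : ∀ c y : ℝ, dq y ((((4 * m : ℤ) : ℝ) + 1) * Real.pi / 2) c = c * Real.cos y := by
    intro c y
    have h1 : (((4 * m : ℤ) : ℝ) + 1) * Real.pi / 2 - y
        = (Real.pi / 2 - y) + (m : ℤ) * (2 * Real.pi) := by push_cast; ring
    have h2 : (((4 * m : ℤ) : ℝ) + 1) * Real.pi / 2 + y
        = (Real.pi / 2 + y) + (m : ℤ) * (2 * Real.pi) := by push_cast; ring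
    rw [dq, h1, h2, Real.sin_add_int_mul_two_pi, Real.sin_add_int_mul_two_pi,
      Real.sin_pi_div_two_sub, Real.sin_add]
    simp
    ring
  have hsinb : Real.sin ((((4 * m : ℤ) : ℝ) + 1) * Real.pi / 2) = 1 := by
    have h : (((4 * m : ℤ) : ℝ) + 1) * Real.pi / 2 = Real.pi / 2 + (m : ℤ) * (2 * Real.pi) := by
      push_cast; ring
    rw [h, Real.sin_add_int_mul_two_pi, Real.sin_pi_div_two]
  have hcos : Real.cos (((4 * m : ℤ) : ℝ) * Real.pi / 2) = 1 := by
    rw [show ((4 * m : ℤ) : ℝ) * Real.pi / 2 = (m : ℤ) * (2 * Real.pi) by push_cast; ring]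
    exact Real.cos_int_mul_two_pi m
  have hsum : ∀ N : ℕ, ((∑ j ∈ Finset.range N, j : ℕ) : ℤ) * 2 = (N : ℤ) * ((N : ℤ) - 1) := by
    intro N
    induction N with
    | zero => simp
    | succ p ih =>
      rw [Finset.sum_range_succ]
      push_cast
      push_cast at ih
      linear_combination ih
  rw [qBern]
  simp only [key1, key2, hcos, hsinb, mul_one, one_mul]
  rw [Finset.prod_mul_distrib, Finset.prod_mul_distrib,
    Finset.prod_const, Finset.prod_const, Finset.prod_pow_eq_pow_sum,
    Finset.prod_pow_eq_pow_sum, Finset.prod_pow_eq_pow_sum]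
  simp only [Finset.card_range]
  have hz : q ^ ((i : ℤ) ^ 2 - (n : ℤ) * (i : ℤ))
      = q ^ (∑ j ∈ Finset.range i, j) * q ^ (∑ j ∈ Finset.range (n - i), j)
        / q ^ (∑ j ∈ Finset.range n, j) := by
    rw [← zpow_natCast q (∑ j ∈ Finset.range i, j), ← zpow_natCast q (∑ j ∈ Finset.range (n - i), j),
      ← zpow_natCast q (∑ j ∈ Finset.range n, j), ← zpow_add₀ hq0, ← zpow_sub₀ hq0]
    congr 1
    have h1 := hsum i
    have h2 := hsum (n - i)
    have h3 := hsum n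
    have hni : ((n - i : ℕ) : ℤ) = (n : ℤ) - (i : ℤ) := by omega
    rw [hni] at h2
    have h2g : (2 : ℤ) * ((i : ℤ) ^ 2 - (n : ℤ) * (i : ℤ))
        = 2 * (((∑ j ∈ Finset.range i, j : ℕ) : ℤ) + ((∑ j ∈ Finset.range (n - i), j : ℕ) : ℤ)
            - ((∑ j ∈ Finset.range n, j : ℕ) : ℤ)) := by
      linear_combination -h1 - h2 + h3
    exact mul_left_cancel₀ two_ne_zero h2g
  rw [hz]
  field_simp
end

section
/- (de Casteljau type Algorithm 2, explicit form) Let q > 0, let a < b be real numbers with d(a,b;q^i) ≠ 0 for i = 0,…,n−1, and let b_0,…,b_n be points in ℝ^d. Define b̄^0_k(x) = b_k for k = 0,…,n, and recursively b̄^{r+1}_k(x) = (d(x,b;q^{n−r−k−1})/d(a,b;q^{n−r−1}))·b̄^r_k(x) + q^{n−r−k−1}·(d(a,x;q^k)/d(a,b;q^{n−r−1}))·b̄^r_{k+1}(x) for r = 0,…,n−1 and k = 0,…,n−r−1. Then for every r with 0 ≤ r ≤ n and every k with 0 ≤ k ≤ n−r, b̄^r_k(x) = Σ_{j=0}^{r}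 q^{j(n−r−k)} · b_{k+j} · [r choose j]_q · (∏_{i=0}^{j−1} d(a,x;q^{i+k}) · ∏_{i=0}^{r−j−1} d(x,b;q^{i+n−r−k})) / ∏_{i=0}^{r−1} d(a,b;q^{i+n−r}). -/
lemma qFact_ne {q : ℝ} (hq : 0 < q) (k : ℕ) : qFact q k ≠ 0 := (qFact_pos hq k).ne'

lemma qInt_ne {q : ℝ} (hq : 0 < q) (k : ℕ) : qInt q (k + 1) ≠ 0 := (qInt_pos hq k).ne'

lemma qBinom_zero {q : ℝ} (hq : 0 < q) (n : ℕ) : qBinom q n 0 = 1 := by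
  simp [qBinom, qFact, qFact_ne hq n]

lemma qBinom_self {q : ℝ} (hq : 0 < q) (n : ℕ) : qBinom q n n = 1 := by
  simp [qBinom, qFact, qFact_ne hq n]

lemma qPascal' {q : ℝ} (hq : 0 < q) (j t : ℕ) :
    qBinom q (j + t + 2) (j + 1) =
      q ^ (j + 1) * qBinom q (j + t + 1) (j + 1) + qBinom q (j + t + 1) j := by
  have e1 : j + t + 2 - (j + 1) = t + 1 := by omega
  have e2 : j + t + 1 - (j + 1) = t := by omega
  have e3 : j + t + 1 - j = t + 1 := by omega
  rw [qBinom, qBinom, qBinom, e1, e2, e3]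
  rw [show qFact q (j + t + 2) = qInt q (j + t + 2) * qFact q (j + t + 1) from rfl]
  rw [show qFact q (t + 1) = qInt q (t + 1) * qFact q t from rfl]
  rw [show qFact q (j + 1) = qInt q (j + 1) * qFact q j from rfl]
  rw [show j + t + 2 = (j + 1) + (t + 1) by ring, qInt_add]
  field_simp [qFact_ne hq, qInt_ne hq]
  ring

lemma qPascal {q : ℝ} (hq : 0 < q) {j r : ℕ} (h : j < r) :
    qBinom q (r + 1) (j + 1) = q ^ (j + 1) * qBinom q r (j + 1) + qBinom q r j := by
  obtain ⟨t, rfl⟩ : ∃ t, r = j + t + 1 := ⟨r - j - 1, by omega⟩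
  exact qPascal' hq j t

lemma step_sum {M : Type*} [AddCommMonoid M] [Module ℝ M] (r : ℕ) (P Q C : ℕ → ℝ) (v : ℕ → M)
    (h0 : C 0 = P 0) (hmid : ∀ j < r, C (j + 1) = P (j + 1) + Q j) (htop : C (r + 1) = Q r) :
    (∑ j ∈ Finset.range (r + 1), P j • v j) + (∑ j ∈ Finset.range (r + 1), Q j • v (j + 1)) =
      ∑ j ∈ Finset.range (r + 2), C j • v j := by
  rw [Finset.sum_range_succ' (fun j => C j • v j) (r + 1),
      Finset.sum_range_succ (fun j => C (j + 1) • v (j + 1)) r,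
      Finset.sum_range_succ' (fun j => P j • v j) r,
      Finset.sum_range_succ (fun j => Q j • v (j + 1)) r, h0, htop]
  have : ∑ j ∈ Finset.range r, C (j + 1) • v (j + 1) =
      ∑ j ∈ Finset.range r, (P (j + 1) • v (j + 1) + Q j • v (j + 1)) := by
    refine Finset.sum_congr rfl fun j hj => ?_
    rw [hmid j (Finset.mem_range.mp hj), add_smul]
  rw [this, Finset.sum_add_distrib]
  abel

/-- de Casteljau type Algorithm 2: explicit form of the intermediate points. -/
theorem deCasteljau_algorithm_two (n d : ℕ) (q a b : ℝ) (hq : 0 < q) (hab : a < b)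
    (hd : ∀ i < n, dq a b (q ^ i) ≠ 0)
    (bp : ℕ → Fin d → ℝ) (x : ℝ) (bbar : ℕ → ℕ → Fin d → ℝ)
    (h0 : ∀ k ≤ n, bbar 0 k = bp k)
    (hrec : ∀ r k, r < n → k ≤ n - r - 1 →
      bbar (r + 1) k =
        (dq x b (q ^ (n - r - k - 1)) / dq a b (q ^ (n - r - 1))) • bbar r k +
        (q ^ (n - r - k - 1) * (dq a x (q ^ k) / dq a b (q ^ (n - r - 1)))) • bbar r (k + 1)) :
    ∀ r k, r ≤ n → k ≤ n - r →
      bbar r k = ∑ j ∈ Finset.range (r + 1),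
        (q ^ (j * (n - r - k)) * qBinom q r j *
          ((∏ i ∈ Finset.range j, dq a x (q ^ (i + k))) *
            ∏ i ∈ Finset.range (r - j), dq x b (q ^ (i + n - r - k))) /
          ∏ i ∈ Finset.range r, dq a b (q ^ (i + n - r))) • bp (k + j) := by
  intro r
  induction r with
  | zero =>
    intro k _ hk
    rw [h0 k (by omega), Finset.sum_range_one]
    simp [qBinom, qFact]
  | succ r ih =>
    intro k hr hk
    rw [hrec r k (by omega) (by omega), ih k (by omega) (by omega),
        ih (k + 1) (by omega) (by omega)]
    obtain ⟨m, rfl⟩ : ∃ m, n = r + 1 + (k + m) := ⟨n - r - 1 - k, by omega⟩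
    simp only [show r + 1 + (k + m) - r - k - 1 = m by omega,
      show r + 1 + (k + m) - r - 1 = k + m by omega,
      show r + 1 + (k + m) - r - k = m + 1 by omega,
      show r + 1 + (k + m) - r - (k + 1) = m by omega,
      show r + 1 + (k + m) - (r + 1) - k = m by omega,
      show ∀ i : ℕ, i + (r + 1 + (k + m)) - r - k = i + (m + 1) from fun i => by omega,
      show ∀ i : ℕ, i + (r + 1 + (k + m)) - r - (k + 1) = i + m from fun i => by omega,
      show ∀ i : ℕ, i + (r + 1 + (k + m)) - r = i + 1 + (k + m) from fun i => by omega,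
      show ∀ i : ℕ, i + (r + 1 + (k + m)) - (r + 1) - k = i + m from fun i => by omega,
      show ∀ i : ℕ, i + (r + 1 + (k + m)) - (r + 1) = i + (k + m) from fun i => by omega,
      show ∀ i : ℕ, i + (k + 1) = i + 1 + k from fun i => by omega,
      show ∀ j : ℕ, k + 1 + j = k + (j + 1) from fun j => by omega]
    simp only [show m + 1 - 1 = m by omega,
      show ∀ i : ℕ, i + 1 + (k + m) - k = i + 1 + m from fun i => by omega,
      show ∀ i : ℕ, i + 1 + (k + m) - (k + 1) = i + m from fun i => by omega,
      show ∀ i : ℕ, i + (k + m) - k = i + m from fun i => by omega]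
    rw [Finset.smul_sum, Finset.smul_sum]
    simp only [smul_smul]
    have hD : dq a b (q ^ (k + m)) ≠ 0 := hd (k + m) (by omega)
    have hE : (∏ i ∈ Finset.range r, dq a b (q ^ (i + 1 + (k + m)))) ≠ 0 :=
      Finset.prod_ne_zero_iff.mpr fun i hi => hd _ (by
        have := Finset.mem_range.mp hi; omega)
    refine step_sum r
      (fun j => dq x b (q ^ m) / dq a b (q ^ (k + m)) *
        (q ^ (j * (m + 1)) * qBinom q r j *
          ((∏ i ∈ Finset.range j, dq a x (q ^ (i + k))) *
            ∏ i ∈ Finset.range (r - j), dq x b (q ^ (i + 1 + m))) /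
          ∏ i ∈ Finset.range r, dq a b (q ^ (i + 1 + (k + m)))))
      (fun j => q ^ m * (dq a x (q ^ k) / dq a b (q ^ (k + m))) *
        (q ^ (j * m) * qBinom q r j *
          ((∏ i ∈ Finset.range j, dq a x (q ^ (i + 1 + k))) *
            ∏ i ∈ Finset.range (r - j), dq x b (q ^ (i + m))) /
          ∏ i ∈ Finset.range r, dq a b (q ^ (i + 1 + (k + m)))))
      (fun j => q ^ (j * m) * qBinom q (r + 1) j *
        ((∏ i ∈ Finset.range j, dq a x (q ^ (i + k))) *
          ∏ i ∈ Finset.range (r + 1 - j), dq x b (q ^ (i + m))) /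
        ∏ i ∈ Finset.range (r + 1), dq a b (q ^ (i + (k + m))))
      (fun j => bp (k + j)) ?_ ?_ ?_
    · -- C 0 = P 0
      beta_reduce
      simp only [Nat.sub_zero]
      rw [qBinom_zero hq, qBinom_zero hq,
        Finset.prod_range_succ' (fun i => dq x b (q ^ (i + m))) r,
        Finset.prod_range_succ' (fun i => dq a b (q ^ (i + (k + m)))) r]
      simp only [Finset.prod_range_zero, Nat.zero_mul, Nat.zero_add, zero_add, pow_zero,
        one_mul, mul_one]
      field_simp
    · -- middle
      intro j hj
      beta_reduce
      rw [qPascal hq hj,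
        show r + 1 - (j + 1) = r - (j + 1) + 1 by omega,
        show r - j = r - (j + 1) + 1 by omega]
      simp only [Finset.prod_range_succ']
      simp only [Finset.prod_range_zero, Nat.zero_add, zero_add, pow_zero, one_mul, mul_one]
      field_simp
      ring
    · -- top
      beta_reduce
      rw [qBinom_self hq, qBinom_self hq]
      simp only [Nat.sub_self, Finset.prod_range_zero, mul_one]
      rw [Finset.prod_range_succ' (fun i => dq a x (q ^ (i + k))) r,
        Finset.prod_range_succ' (fun i => dq a b (q ^ (i + (k + m)))) r]
      simp only [Nat.zero_add, zero_add]
      field_simp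
      ring
end

section
/- (Variation diminishing, Corollary) Let q > 0, let k ∈ ℤ, let b_0,…,b_n be real numbers, and let P(x) = Σ_{i=0}^{n} b_i·B^n_i(x;q) be the quantum trigonometric Bézier curve with these scalar control points on the interval I = [kπ/2, (k+1)π/2]. Then for every increasing sequence of points x_0 < x_1 < ⋯ < x_m in I, the number of strict sign changes of the sequence (P(x_0), P(x_1), …, P(x_m)) is at most the number of strict sign changes of the sequence (b_0, b_1, …, b_n); consequently S^−(P) ≤ S^−(b_0,…,b_n), where S^−(P) is the supremum of S^−(P(x_0),…,P(x_m)) over all such increasing sequences. -/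
namespace VD
open Polynomial Set

/-! ### Sign machinery -/

def SS (a b : ℝ) : Prop := (0 < a ↔ 0 < b) ∧ (a < 0 ↔ b < 0)

lemma SS_of_pos_mul {c x : ℝ} (hc : 0 < c) : SS (c * x) x := by
  constructor
  · constructor <;> intro h <;> nlinarith
  · constructor <;> intro h <;> nlinarith

lemma SS.ne_zero {a b : ℝ} (h : SS a b) : a ≠ 0 ↔ b ≠ 0 := by
  rcases h with ⟨h1, h2⟩
  rcases lt_trichotomy a 0 with h' | h' | h' <;> rcases lt_trichotomy b 0 with h'' | h'' | h'' <;>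
    constructor <;> intro h <;> simp_all <;> linarith

lemma SS.mul_neg_iff {a b a' b' : ℝ} (h1 : SS a a') (h2 : SS b b') :
    a * b < 0 ↔ a' * b' < 0 := by
  rw [_root_.mul_neg_iff, _root_.mul_neg_iff, h1.1, h1.2, h2.1, h2.2]

lemma forall2_filter {v w : List ℝ} (h : List.Forall₂ SS v w) :
    List.Forall₂ SS (v.filter fun x => x ≠ 0) (w.filter fun x => x ≠ 0) := by
  induction h with
  | nil => simp
  | cons hab h ih =>
    rename_i a b l1 l2
    by_cases ha : a = 0
    · have hb : b = 0 := by
        by_contra hb; exact (hab.ne_zero.mpr hb) ha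
      simpa [ha, hb] using ih
    · have hb : b ≠ 0 := hab.ne_zero.mp ha
      simpa [ha, hb] using List.Forall₂.cons hab ih

lemma signChanges_congr : ∀ {v w : List ℝ}, List.Forall₂ SS v w → signChanges v = signChanges w
  | [], [], _ => rfl
  | [_], [_], _ => rfl
  | a :: b :: t, a' :: b' :: t', h => by
    rcases h with _ | ⟨h1, h'⟩
    rcases h' with _ | ⟨h2, h''⟩
    have := signChanges_congr (List.Forall₂.cons h2 h'')
    simp only [signChanges, this, h1.mul_neg_iff h2]

lemma strictSignChanges_congr {v w : List ℝ} (h : List.Forall₂ SS v w) :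
    strictSignChanges v = strictSignChanges w :=
  signChanges_congr (forall2_filter h)

/-! ### Sign changes of sampled values bounded by root count -/

lemma signChanges_cons_le {g : ℝ → ℝ} (hg : Continuous g) (Z : Finset ℝ)
    (hZ : ∀ r, g r = 0 → r ∈ Z) :
    ∀ (l : List ℝ) (a : ℝ), (a :: l).Chain' (· < ·) → (∀ u ∈ a :: l, g u ≠ 0) →
      signChanges ((a :: l).map g) ≤ (Z.filter (fun r => a < r)).card := by
  intro l
  induction l with
  | nil => intro a _ _; simp [signChanges]
  | cons b t ih =>
    intro a hc hnz
    have hab : a < b := (List.isChain_cons_cons.mp hc).1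
    have hct : (b :: t).Chain' (· < ·) := (List.isChain_cons_cons.mp hc).2
    have hnz' : ∀ u ∈ b :: t, g u ≠ 0 := fun u hu => hnz u (List.mem_cons_of_mem a hu)
    have ihb := ih b hct hnz'
    have hsub : Z.filter (fun r => b < r) ⊆ Z.filter (fun r => a < r) := by
      apply Finset.monotone_filter_right
      intro r _ hr
      exact hab.trans hr
    have heq : signChanges ((a :: b :: t).map g)
        = (if g a * g b < 0 then 1 else 0) + signChanges ((b :: t).map g) := by
      simp [signChanges]
    rw [heq]
    by_cases hs : g a * g b < 0
    · have hroot : ∃ r ∈ Set.Ioo a b, g r = 0 := by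
        rcases _root_.mul_neg_iff.mp hs with ⟨h1, h2⟩ | ⟨h1, h2⟩
        · obtain ⟨r, hr, hr0⟩ := intermediate_value_Ioo' hab.le hg.continuousOn
            (show (0:ℝ) ∈ Ioo (g b) (g a) from ⟨h2, h1⟩)
          exact ⟨r, hr, hr0⟩
        · obtain ⟨r, hr, hr0⟩ := intermediate_value_Ioo hab.le hg.continuousOn
            (show (0:ℝ) ∈ Ioo (g a) (g b) from ⟨h1, h2⟩)
          exact ⟨r, hr, hr0⟩
      rcases hroot with ⟨r, ⟨har, hrb⟩, hr0⟩
      have hrZ : r ∈ Z.filter (fun r => a < r) := Finset.mem_filter.mpr ⟨hZ r hr0, har⟩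
      have hrnotb : r ∉ Z.filter (fun r => b < r) := by
        simp only [Finset.mem_filter]
        rintro ⟨-, h⟩; exact absurd h (not_lt.mpr hrb.le)
      have hins : insert r (Z.filter (fun r => b < r)) ⊆ Z.filter (fun r => a < r) := by
        intro z hz
        rcases Finset.mem_insert.mp hz with rfl | hz
        · exact hrZ
        · exact hsub hz
      have := Finset.card_le_card hins
      rw [Finset.card_insert_of_notMem hrnotb] at this
      simp only [hs, if_pos]
      omega
    · simp only [hs, if_neg, not_false_iff, zero_add]
      exact ihb.trans (Finset.card_le_card hsub)

lemma strictSignChanges_map_le {g : ℝ → ℝ} (hg : Continuous g) (Z : Finset ℝ)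
    (hZ : ∀ r, g r = 0 → r ∈ Z) (l : List ℝ) (hl : l.Chain' (· < ·))
    (h0 : ∀ u ∈ l, 0 ≤ u) :
    strictSignChanges (l.map g) ≤ (Z.filter (fun r => 0 < r)).card := by
  have hfm : (l.map g).filter (fun x => x ≠ 0) = (l.filter (fun u => g u ≠ 0)).map g := by
    rw [List.filter_map]
    rfl
  rw [strictSignChanges, hfm]
  have hsub : List.Sublist (l.filter (fun u => g u ≠ 0)) l := List.filter_sublist (l := l)
  have hc' : (l.filter (fun u => g u ≠ 0)).Chain' (· < ·) := hl.sublist hsub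
  match hm : l.filter (fun u => g u ≠ 0) with
  | [] => simp [signChanges]
  | a :: t =>
    rw [hm] at hsub hc'
    have hmem : ∀ u ∈ a :: t, u ∈ l := fun u hu => hsub.mem hu
    have hnz : ∀ u ∈ a :: t, g u ≠ 0 := by
      intro u hu
      have h2 : u ∈ List.filter (fun u => decide (g u ≠ 0)) l := by
        rw [hm]; exact hu
      rw [List.mem_filter] at h2
      simpa using h2.2
    have := signChanges_cons_le hg Z hZ t a hc' hnz
    refine this.trans (Finset.card_le_card ?_)
    apply Finset.monotone_filter_right
    intro r _ hr
    exact lt_of_le_of_lt (h0 a (hmem a (List.mem_cons_self (a := a) (l := t)))) hr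

/-! ### Positive roots and Rolle -/

noncomputable def posRoots (P : ℝ[X]) : Finset ℝ := P.roots.toFinset.filter (fun r => 0 < r)

lemma mem_posRoots {P : ℝ[X]} {r : ℝ} :
    r ∈ posRoots P ↔ (P ≠ 0 ∧ P.eval r = 0) ∧ 0 < r := by
  simp [posRoots, Multiset.mem_toFinset, mem_roots', IsRoot]

lemma posRoots_neg (P : ℝ[X]) : posRoots (-P) = posRoots P := by
  ext r
  simp only [mem_posRoots, neg_ne_zero, eval_neg, neg_eq_zero]

lemma card_posRoots_le_succ (P : ℝ[X]) :
    (posRoots P).card ≤ (posRoots (derivative P)).card + 1 := by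
  rcases eq_or_ne (derivative P) 0 with hP' | hP'
  · rw [eq_C_of_derivative_eq_zero hP']
    have : posRoots (C (P.coeff 0)) = ∅ := by
      ext r; simp [mem_posRoots, eval_C]
    simp [this]
  have hP : P ≠ 0 := fun h => hP' (by simp [h])
  apply Finset.card_le_of_interleaved
  intro x hx y hy hxy _
  rw [mem_posRoots] at hx hy
  obtain ⟨z, hz, hz0⟩ := exists_deriv_eq_zero hxy P.continuousOn (hx.1.2.trans hy.1.2.symm)
  rw [Polynomial.deriv] at hz0
  exact ⟨z, mem_posRoots.mpr ⟨⟨hP', hz0⟩, hx.2.trans hz.1⟩, hz.1, hz.2⟩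

lemma card_posRoots_le_of_pos (P : ℝ[X]) (h0 : 0 < P.eval 0)
    (hpos : ∀ ε > 0, ∃ d, d ∈ Set.Ioo (0:ℝ) ε ∧ 0 < (derivative P).eval d) :
    (posRoots P).card ≤ (posRoots (derivative P)).card := by
  obtain ⟨d1, hd1, hd1pos⟩ := hpos 1 one_pos
  have hP' : derivative P ≠ 0 := fun h => by simp [h] at hd1pos
  have key : (insert (0:ℝ) (posRoots P)).card ≤ (posRoots (derivative P)).card + 1 := by
    apply Finset.card_le_of_interleaved
    intro x hx y hy hxy hgap
    rcases Finset.mem_insert.mp hx with rfl | hx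
    · have hy' : y ∈ posRoots P := by
        rcases Finset.mem_insert.mp hy with rfl | hy'
        · exact absurd hxy (lt_irrefl _)
        · exact hy'
      rw [mem_posRoots] at hy'
      have hy0 : 0 < y := hy'.2
      obtain ⟨c, hc, hcs⟩ := exists_deriv_eq_slope (f := fun u => P.eval u) hy0
        P.continuousOn P.differentiableOn
      rw [Polynomial.deriv] at hcs
      have hcneg : (derivative P).eval c < 0 := by
        rw [hcs, hy'.1.2]
        apply div_neg_of_neg_of_pos <;> simp [h0, hy0]
      obtain ⟨d, hd, hdpos⟩ := hpos y hy0
      have hdc : d ≠ c := fun h => by rw [h] at hdpos; linarith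
      have hroot : ∃ z, z ∈ Set.Ioo 0 y ∧ (derivative P).eval z = 0 := by
        rcases lt_or_gt_of_ne hdc with h | h
        · obtain ⟨z, hz, hz0⟩ := intermediate_value_Ioo' h.le
            (derivative P).continuous.continuousOn (show (0:ℝ) ∈ Ioo _ _ from ⟨hcneg, hdpos⟩)
          exact ⟨z, ⟨hd.1.trans hz.1, hz.2.trans hc.2⟩, hz0⟩
        · obtain ⟨z, hz, hz0⟩ := intermediate_value_Ioo h.le
            (derivative P).continuous.continuousOn (show (0:ℝ) ∈ Ioo _ _ from ⟨hcneg, hdpos⟩)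
          exact ⟨z, ⟨hc.1.trans hz.1, hz.2.trans hd.2⟩, hz0⟩
      obtain ⟨z, hz, hz0⟩ := hroot
      exact ⟨z, mem_posRoots.mpr ⟨⟨hP', hz0⟩, hz.1⟩, hz.1, hz.2⟩
    · have hy' : y ∈ posRoots P := by
        rcases Finset.mem_insert.mp hy with rfl | hy'
        · rw [mem_posRoots] at hx; exact absurd (hx.2.trans hxy) (lt_irrefl _)
        · exact hy'
      rw [mem_posRoots] at hx hy'
      obtain ⟨z, hz, hz0⟩ := exists_deriv_eq_zero hxy P.continuousOn (hx.1.2.trans hy'.1.2.symm)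
      rw [Polynomial.deriv] at hz0
      exact ⟨z, mem_posRoots.mpr ⟨⟨hP', hz0⟩, hx.2.trans hz.1⟩, hz.1, hz.2⟩
  have h0notin : (0:ℝ) ∉ posRoots P := by
    rw [mem_posRoots]; rintro ⟨-, h⟩; exact absurd h (lt_irrefl _)
  rw [Finset.card_insert_of_notMem h0notin] at key
  omega

/-! ### The polynomial attached to a coefficient sequence -/

noncomputable def Qp (a : ℕ → ℝ) (n : ℕ) : ℝ[X] :=
  ∑ i ∈ Finset.range (n + 1), C (a i) * X ^ i

lemma eval_Qp (a : ℕ → ℝ) (n : ℕ) (u : ℝ) :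
    (Qp a n).eval u = ∑ i ∈ Finset.range (n + 1), a i * u ^ i := by
  simp [Qp, eval_finset_sum]

lemma Qp_eval_zero (a : ℕ → ℝ) (n : ℕ) : (Qp a n).eval 0 = a 0 := by
  rw [eval_Qp, Finset.sum_eq_single 0]
  · simp
  · intro i hi hne
    simp [zero_pow hne]
  · intro h
    exact absurd (Finset.mem_range.mpr (Nat.succ_pos n)) h

lemma Qp_neg (a : ℕ → ℝ) (n : ℕ) : -Qp a n = Qp (fun i => -a i) n := by
  simp [Qp, ← Finset.sum_neg_distrib]

lemma derivative_Qp (a : ℕ → ℝ) (n : ℕ) :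
    derivative (Qp a (n + 1)) = Qp (fun i => ((i : ℝ) + 1) * a (i + 1)) n := by
  rw [Qp, map_sum, Finset.sum_range_succ']
  simp only [derivative_C_mul_X_pow]
  rw [Qp]
  simp only [Nat.cast_zero, mul_zero, map_zero, zero_mul, add_zero, pow_zero, Nat.cast_add,
    Nat.cast_one, Nat.add_sub_cancel, map_mul, map_add, map_natCast, map_one]
  apply Finset.sum_congr rfl
  intro i _
  ring

lemma Qp_zero_shift (a : ℕ → ℝ) (n : ℕ) (h0 : a 0 = 0) :
    Qp a (n + 1) = X * Qp (fun i => a (i + 1)) n := by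
  rw [Qp, Finset.sum_range_succ', Qp, Finset.mul_sum]
  simp only [h0, map_zero, zero_mul, add_zero, pow_zero]
  apply Finset.sum_congr rfl
  intro i _
  ring

lemma posRoots_X_mul (R : ℝ[X]) : posRoots (X * R) = posRoots R := by
  ext r
  simp only [mem_posRoots, eval_mul, eval_X, mul_ne_zero_iff, mul_eq_zero]
  constructor
  · rintro ⟨⟨⟨-, hR⟩, h⟩, hr⟩
    rcases h with h | h
    · exact absurd h (ne_of_gt hr)
    · exact ⟨⟨hR, h⟩, hr⟩
  · rintro ⟨⟨hR, h⟩, hr⟩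
    exact ⟨⟨⟨X_ne_zero, hR⟩, Or.inr h⟩, hr⟩

lemma eval_factor (a : ℕ → ℝ) (n j : ℕ) (hj : j ≤ n) (hz : ∀ i, i < j → a i = 0) (u : ℝ) :
    (Qp a n).eval u = u ^ j * ∑ i ∈ Finset.range (n + 1 - j), a (j + i) * u ^ i := by
  rw [eval_Qp, Finset.range_eq_Ico,
    ← Finset.sum_Ico_consecutive _ (Nat.zero_le j) (by omega : j ≤ n + 1)]
  have h1 : ∑ i ∈ Finset.Ico 0 j, a i * u ^ i = 0 := by
    apply Finset.sum_eq_zero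
    intro i hi
    rw [Finset.mem_Ico] at hi
    rw [hz i hi.2, zero_mul]
  rw [h1, zero_add, Finset.sum_Ico_eq_sum_range, Finset.mul_sum]
  apply Finset.sum_congr (by rw [Finset.range_eq_Ico])
  intro i _
  rw [pow_add]
  ring

lemma pos_near_zero (a : ℕ → ℝ) (n j : ℕ) (hj : j ≤ n) (hz : ∀ i, i < j → a i = 0)
    (hpos : 0 < a j) :
    ∀ ε > 0, ∃ d, d ∈ Set.Ioo (0:ℝ) ε ∧ 0 < (Qp a n).eval d := by
  intro ε hε
  set g : ℝ → ℝ := fun u => ∑ i ∈ Finset.range (n + 1 - j), a (j + i) * u ^ i with hg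
  have hgc : Continuous g := by
    apply continuous_finset_sum
    intro i _
    exact (continuous_const.mul (continuous_pow i))
  have hg0 : g 0 = a j := by
    rw [hg]
    simp only
    rw [Finset.sum_eq_single 0]
    · simp
    · intro i hi hne
      simp [zero_pow hne]
    · intro h
      exact absurd (Finset.mem_range.mpr (by omega)) h
  have hev : ∀ᶠ u in nhds (0:ℝ), 0 < g u := by
    have := hgc.continuousAt (x := 0)
    exact this.eventually (eventually_gt_nhds (by rw [hg0]; exact hpos))
  rw [Metric.eventually_nhds_iff] at hev
  obtain ⟨δ, hδ, hball⟩ := hev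
  refine ⟨min (ε / 2) (δ / 2), ⟨by positivity, ?_⟩, ?_⟩
  · calc min (ε / 2) (δ / 2) ≤ ε / 2 := min_le_left _ _
      _ < ε := by linarith
  · set d := min (ε / 2) (δ / 2) with hd
    have hd0 : 0 < d := by positivity
    have hdδ : dist d 0 < δ := by
      rw [Real.dist_eq, sub_zero, abs_of_pos hd0]
      calc d ≤ δ / 2 := min_le_right _ _
        _ < δ := by linarith
    have := hball hdδ
    rw [eval_factor a n j hj hz d]
    exact mul_pos (pow_pos hd0 j) this

/-! ### List helpers for the Descartes induction -/

lemma filter_eq_nil_of_zero {l : List ℝ} (h : ∀ y ∈ l, y = 0) :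
    l.filter (fun x => x ≠ 0) = [] := by
  rw [List.filter_eq_nil_iff]
  intro y hy
  simp [h y hy]

lemma ssc_cons_eq (x y : ℝ) (hx : x ≠ 0) (hy : y ≠ 0) (l1 l2 : List ℝ)
    (h1 : ∀ z ∈ l1, z = 0) :
    strictSignChanges (x :: (l1 ++ y :: l2)) =
      (if x * y < 0 then 1 else 0) + strictSignChanges (l1 ++ y :: l2) := by
  unfold strictSignChanges
  simp only [List.filter_cons, List.filter_append, filter_eq_nil_of_zero h1]
  simp only [hx, hy, ne_eq, not_false_iff, if_true, List.nil_append, decide_not]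
  simp [signChanges, hx, hy]

lemma map_range_decomp (f : ℕ → ℝ) (j n : ℕ) (hj : j < n + 1) :
    (List.range (n + 1)).map f
      = ((List.range j).map f) ++ f j :: ((List.range (n - j)).map fun i => f (j + (i + 1))) := by
  have h1 : n + 1 = j + (n + 1 - j) := by omega
  rw [h1, List.range_add, List.map_append]
  congr 1
  have h2 : n + 1 - j = (n - j) + 1 := by omega
  rw [h2, List.range_succ_eq_map, List.map_cons, List.map_cons, List.map_map, List.map_map]
  simp [Function.comp_def]

/-! ### Descartes' rule of signs (distinct positive roots) -/

lemma descartes : ∀ (n : ℕ) (a : ℕ → ℝ),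
    (posRoots (Qp a n)).card ≤ strictSignChanges ((List.range (n + 1)).map a) := by
  intro n
  induction n with
  | zero =>
    intro a
    have h1 : Qp a 0 = C (a 0) := by simp [Qp]
    have h2 : posRoots (C (a 0)) = ∅ := by ext r; simp [mem_posRoots, eval_C]
    rw [h1, h2]
    simp
  | succ n ih =>
    intro a
    have hlist : (List.range (n + 2)).map a
        = a 0 :: (List.range (n + 1)).map (fun i => a (i + 1)) := by
      rw [List.range_succ_eq_map, List.map_cons, List.map_map]
      rfl
    by_cases ha0 : a 0 = 0
    · rw [Qp_zero_shift a n ha0, posRoots_X_mul]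
      refine (ih _).trans (le_of_eq ?_)
      rw [hlist, ha0]
      simp [strictSignChanges]
    · by_cases hall : ∀ i, i < n + 1 → a (i + 1) = 0
      · have hval : ∀ u, (Qp a (n + 1)).eval u = a 0 := by
          intro u
          rw [eval_Qp, Finset.sum_eq_single 0]
          · simp
          · intro i hi hne
            obtain ⟨i', rfl⟩ : ∃ i', i = i' + 1 := ⟨i - 1, by omega⟩
            rw [Finset.mem_range] at hi
            rw [hall i' (by omega), zero_mul]
          · intro h; exact absurd (Finset.mem_range.mpr (by omega)) h
        have hempty : posRoots (Qp a (n + 1)) = ∅ := by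
          ext r
          simp only [mem_posRoots, Finset.notMem_empty, iff_false, not_and]
          rintro ⟨-, hev⟩
          rw [hval r] at hev
          exact absurd hev ha0
        rw [hempty]
        simp
      · push_neg at hall
        obtain ⟨i0, hi00, hi0ne⟩ := hall
        have hexj : ∃ i, a (i + 1) ≠ 0 := ⟨i0, hi0ne⟩
        classical
        set j := Nat.find hexj with hjdef
        have hjne : a (j + 1) ≠ 0 := Nat.find_spec hexj
        have hjmin : ∀ i, i < j → a (i + 1) = 0 := fun i hi => not_not.mp (Nat.find_min hexj hi)
        have hjle : j < n + 1 := lt_of_le_of_lt (Nat.find_min' hexj hi0ne) hi00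
        -- rewrite the sign-changes of the coefficient list
        have htail := map_range_decomp (fun i => a (i + 1)) j n hjle
        have hz1 : ∀ z ∈ (List.range j).map (fun i => a (i + 1)), z = 0 := by
          intro z hz
          rw [List.mem_map] at hz
          obtain ⟨i, hi, rfl⟩ := hz
          exact hjmin i (List.mem_range.mp hi)
        have hSC : strictSignChanges ((List.range (n + 2)).map a)
            = (if a 0 * a (j + 1) < 0 then 1 else 0)
              + strictSignChanges ((List.range (n + 1)).map (fun i => a (i + 1))) := by
          rw [hlist, htail]
          exact ssc_cons_eq (a 0) (a (j + 1)) ha0 hjne _ _ hz1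
        -- the derivative polynomial and its sign changes
        have hD := derivative_Qp a n
        have hSS : strictSignChanges ((List.range (n + 1)).map (fun i : ℕ => ((i : ℝ) + 1) * a (i + 1)))
            = strictSignChanges ((List.range (n + 1)).map (fun i => a (i + 1))) := by
          apply strictSignChanges_congr
          rw [List.forall₂_map_left_iff, List.forall₂_map_right_iff, List.forall₂_same]
          intro i _
          exact SS_of_pos_mul (by positivity)
        have hIH := ih (fun i : ℕ => ((i : ℝ) + 1) * a (i + 1))
        rw [hSS] at hIH
        rw [hSC]
        by_cases hlt : a 0 * a (j + 1) < 0
        · rw [if_pos hlt]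
          have := card_posRoots_le_succ (Qp a (n + 1))
          rw [hD] at this
          omega
        · rw [if_neg hlt]
          have hgt : 0 < a 0 * a (j + 1) :=
            lt_of_le_of_ne (not_lt.mp hlt) (Ne.symm (mul_ne_zero ha0 hjne))
          have hzero'' : ∀ i, i < j → ((i : ℝ) + 1) * a (i + 1) = 0 := by
            intro i hi; rw [hjmin i hi, mul_zero]
          have key : (posRoots (Qp a (n + 1))).card
              ≤ (posRoots (Qp (fun i : ℕ => ((i : ℝ) + 1) * a (i + 1)) n)).card := by
            rcases mul_pos_iff.mp hgt with ⟨hpa, hpj⟩ | ⟨hna, hnj⟩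
            · have := card_posRoots_le_of_pos (Qp a (n + 1))
                (by rw [Qp_eval_zero]; exact hpa) ?_
              · rwa [hD] at this
              · intro ε hε
                rw [hD]
                exact pos_near_zero _ n j (by omega) hzero''
                  (by positivity) ε hε
            · have := card_posRoots_le_of_pos (-Qp a (n + 1))
                (by rw [eval_neg, Qp_eval_zero]; linarith) ?_
              · rwa [derivative_neg, hD, posRoots_neg, posRoots_neg] at this
              · intro ε hε
                rw [derivative_neg, hD, Qp_neg]
                refine pos_near_zero _ n j (by omega) ?_ ?_ ε hε
                · intro i hi
                  simp [hjmin i hi]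
                · nlinarith [Nat.cast_nonneg (α := ℝ) j]
          omega

/-! ### More sign helpers -/

lemma SS_of_pos {a b : ℝ} (ha : 0 < a) (hb : 0 < b) : SS a b :=
  ⟨⟨fun _ => hb, fun _ => ha⟩,
   ⟨fun h => absurd h (not_lt.mpr ha.le), fun h => absurd h (not_lt.mpr hb.le)⟩⟩

lemma SS_of_neg {a b : ℝ} (ha : a < 0) (hb : b < 0) : SS a b :=
  ⟨⟨fun h => absurd h (not_lt.mpr ha.le), fun h => absurd h (not_lt.mpr hb.le)⟩,
   ⟨fun _ => hb, fun _ => ha⟩⟩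

lemma SS.symm' {a b : ℝ} (h : SS a b) : SS b a := ⟨h.1.symm, h.2.symm⟩

lemma forall2_ofFn {m : ℕ} (f g : Fin m → ℝ) (h : ∀ j, SS (f j) (g j)) :
    List.Forall₂ SS (List.ofFn f) (List.ofFn g) := by
  rw [List.forall₂_iff_get]
  refine ⟨by simp, ?_⟩
  intro i h1 h2
  rw [List.get_ofFn, List.get_ofFn]
  exact h _

lemma ssc_zero {l : List ℝ} (h : ∀ y ∈ l, y = 0) : strictSignChanges l = 0 := by
  rw [strictSignChanges, filter_eq_nil_of_zero h]
  rfl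

lemma ssc_concat_zero (l : List ℝ) : strictSignChanges (l ++ [(0:ℝ)]) = strictSignChanges l := by
  rw [strictSignChanges, strictSignChanges, List.filter_append]
  simp

lemma map_range_eq_ofFn (A : ℕ → ℝ) (N : ℕ) :
    (List.range N).map A = List.ofFn (fun i : Fin N => A i) := by
  apply List.ext_getElem <;> simp

lemma Qp_coeff (A : ℕ → ℝ) (n i : ℕ) (hi : i < n + 1) : (Qp A n).coeff i = A i := by
  rw [Qp, Polynomial.finset_sum_coeff, Finset.sum_eq_single i]
  · simp [coeff_C_mul, coeff_X_pow]
  · intro j hj hne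
    simp [coeff_C_mul, coeff_X_pow, Ne.symm hne]
  · intro h
    exact absurd (Finset.mem_range.mpr hi) h

/-! ### Values of a polynomial at increasing nonnegative points -/

lemma vals_le (n : ℕ) (A : ℕ → ℝ) (hP : Qp A n ≠ 0) (m : ℕ)
    (w us : Fin (m + 1) → ℝ) (hus : StrictMono us) (h0 : ∀ j, 0 ≤ us j)
    (hss : ∀ j, SS (w j) ((Qp A n).eval (us j))) :
    strictSignChanges (List.ofFn w) ≤ (posRoots (Qp A n)).card := by
  have h1 : strictSignChanges (List.ofFn w)
      = strictSignChanges ((List.ofFn us).map (fun u => (Qp A n).eval u)) := by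
    rw [List.map_ofFn]
    exact strictSignChanges_congr (forall2_ofFn _ _ (fun j => hss j))
  rw [h1]
  refine strictSignChanges_map_le (g := fun u => (Qp A n).eval u)
    (Qp A n).continuous ((Qp A n).roots.toFinset)
    (fun r hr => Multiset.mem_toFinset.mpr (Polynomial.mem_roots'.mpr ⟨hP, hr⟩))
    (List.ofFn us) ?_ ?_
  · apply List.Pairwise.isChain
    rw [List.pairwise_ofFn]
    intro i j hij
    exact hus hij
  · intro u hu
    rw [List.mem_ofFn] at hu
    obtain ⟨j, rfl⟩ := hu
    exact h0 j

/-! ### Sign at infinity -/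

lemma exists_large_sign (A : ℕ → ℝ) (n : ℕ) (han : A n ≠ 0) (B : ℝ) :
    ∃ U : ℝ, B < U ∧ 0 < U ∧ SS ((Qp A n).eval U) (A n) := by
  set g : ℝ → ℝ := fun u => ∑ i ∈ Finset.range (n + 1), A i * (u⁻¹) ^ (n - i) with hg
  have htend : Filter.Tendsto g Filter.atTop (nhds (A n)) := by
    have hlim : ∀ i ∈ Finset.range (n + 1),
        Filter.Tendsto (fun u : ℝ => A i * (u⁻¹) ^ (n - i)) Filter.atTop
          (nhds (A i * (0:ℝ) ^ (n - i))) := fun i _ =>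
      (tendsto_inv_atTop_zero.pow (n - i)).const_mul (A i)
    have h2 := tendsto_finset_sum _ hlim
    have h3 : (∑ i ∈ Finset.range (n + 1), A i * (0:ℝ) ^ (n - i)) = A n := by
      rw [Finset.sum_eq_single n]
      · simp
      · intro i hi hne
        rw [Finset.mem_range] at hi
        rw [zero_pow (by omega : n - i ≠ 0), mul_zero]
      · intro h
        exact absurd (Finset.mem_range.mpr (by omega)) h
    rw [h3] at h2
    exact h2
  have hid : ∀ u : ℝ, 0 < u → (Qp A n).eval u = u ^ n * g u := by
    intro u hu
    rw [eval_Qp, hg, Finset.mul_sum]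
    apply Finset.sum_congr rfl
    intro i hi
    rw [Finset.mem_range] at hi
    have hsplit : u ^ n = u ^ i * u ^ (n - i) := by
      rw [← pow_add]; congr 1; omega
    have hne : u ^ (n - i) ≠ 0 := pow_ne_zero _ (ne_of_gt hu)
    rw [inv_pow, hsplit]
    field_simp
  rcases han.lt_or_gt with hneg | hpos
  · have hev : ∀ᶠ u in Filter.atTop, g u < 0 :=
      htend.eventually (eventually_lt_nhds hneg)
    obtain ⟨U, hgU, hBU⟩ := (hev.and (Filter.eventually_gt_atTop (max B 0))).exists
    have hU0 : 0 < U := lt_of_le_of_lt (le_max_right B 0) hBU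
    refine ⟨U, lt_of_le_of_lt (le_max_left B 0) hBU, hU0, ?_⟩
    rw [hid U hU0]
    exact SS_of_neg (mul_neg_of_pos_of_neg (pow_pos hU0 n) hgU) hneg
  · have hev : ∀ᶠ u in Filter.atTop, 0 < g u :=
      htend.eventually (eventually_gt_nhds hpos)
    obtain ⟨U, hgU, hBU⟩ := (hev.and (Filter.eventually_gt_atTop (max B 0))).exists
    have hU0 : 0 < U := lt_of_le_of_lt (le_max_right B 0) hBU
    refine ⟨U, lt_of_le_of_lt (le_max_left B 0) hBU, hU0, ?_⟩
    rw [hid U hU0]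
    exact SS_of_pos (mul_pos (pow_pos hU0 n) hgU) hpos

/-! ### Trigonometric reduction on the interval `[kπ/2, (k+1)π/2]` -/

noncomputable def gam (k : ℤ) (c : ℝ) : ℝ := (c + 1) / 2 + (-1 : ℝ) ^ k * ((c - 1) / 2)

lemma gam_pos (k : ℤ) {c : ℝ} (hc : 0 < c) : 0 < gam k c := by
  rcases Int.even_or_odd k with h | h
  · rw [gam, h.neg_one_zpow]; linarith
  · rw [gam, h.neg_one_zpow]; linarith

lemma dq_left (k : ℤ) (x c : ℝ) :
    dq ((k:ℝ) * Real.pi / 2) x c = gam k c * Real.sin (x - (k:ℝ) * Real.pi / 2) := by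
  have h1 : x + (k:ℝ) * Real.pi / 2 = (x - (k:ℝ) * Real.pi / 2) + (k:ℝ) * Real.pi := by ring
  rw [dq, h1, Real.sin_add_int_mul_pi, gam]
  ring

lemma dq_right (k : ℤ) (x c : ℝ) :
    dq x (((k:ℝ) + 1) * Real.pi / 2) c = gam k c * Real.cos (x - (k:ℝ) * Real.pi / 2) := by
  have h1 : ((k:ℝ) + 1) * Real.pi / 2 - x
      = Real.pi / 2 - (x - (k:ℝ) * Real.pi / 2) - (k:ℝ) * Real.pi + (k:ℝ) * Real.pi := by ring
  have h2 : ((k:ℝ) + 1) * Real.pi / 2 + x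
      = ((x - (k:ℝ) * Real.pi / 2) + Real.pi / 2) + (k:ℝ) * Real.pi := by ring
  have h3 : ((k:ℝ) + 1) * Real.pi / 2 - x
      = (Real.pi / 2 - (x - (k:ℝ) * Real.pi / 2)) := by ring
  rw [dq, h3, h2, Real.sin_add_int_mul_pi, Real.sin_pi_div_two_sub, Real.sin_add_pi_div_two, gam]
  ring

lemma dq_ab (k : ℤ) (c : ℝ) :
    dq ((k:ℝ) * Real.pi / 2) (((k:ℝ) + 1) * Real.pi / 2) c = gam k c := by
  rw [dq_right]
  simp

noncomputable def Cst (q : ℝ) (k : ℤ) (n i : ℕ) : ℝ :=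
  qBinom q n i * ((∏ j ∈ Finset.range i, gam k (q ^ j)) * ∏ j ∈ Finset.range (n - i), gam k (q ^ j))
    / ∏ j ∈ Finset.range n, gam k (q ^ j)

lemma qInt_pos {q : ℝ} (hq : 0 < q) {j : ℕ} (hj : 0 < j) : 0 < qInt q j := by
  rw [qInt]
  apply Finset.sum_pos
  · intro i _
    exact pow_pos hq i
  · exact Finset.nonempty_range_iff.mpr (by omega)

lemma qFact_pos {q : ℝ} (hq : 0 < q) : ∀ j, 0 < qFact q j
  | 0 => one_pos
  | (j+1) => mul_pos (qInt_pos hq (Nat.succ_pos j)) (qFact_pos hq j)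

lemma qBinom_pos {q : ℝ} (hq : 0 < q) (n i : ℕ) : 0 < qBinom q n i :=
  div_pos (qFact_pos hq n) (mul_pos (qFact_pos hq i) (qFact_pos hq (n - i)))

lemma Cst_pos {q : ℝ} (hq : 0 < q) (k : ℤ) (n i : ℕ) : 0 < Cst q k n i := by
  have hprod : ∀ N : ℕ, 0 < ∏ j ∈ Finset.range N, gam k (q ^ j) := by
    intro N
    apply Finset.prod_pos
    intro j _
    exact gam_pos k (pow_pos hq j)
  exact div_pos (mul_pos (qBinom_pos hq n i) (mul_pos (hprod i) (hprod (n - i)))) (hprod n)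

lemma qBern_eq {q : ℝ} (hq : 0 < q) (k : ℤ) (n i : ℕ) (x : ℝ) :
    qBern q ((k:ℝ) * Real.pi / 2) (((k:ℝ) + 1) * Real.pi / 2) n i x
      = Cst q k n i * Real.sin (x - (k:ℝ) * Real.pi / 2) ^ i
          * Real.cos (x - (k:ℝ) * Real.pi / 2) ^ (n - i) := by
  have hprod : ∀ (v : ℝ) (f : ℕ → ℝ) (N : ℕ), (∀ j, f j = gam k (q ^ j) * v) →
      ∏ j ∈ Finset.range N, f j = (∏ j ∈ Finset.range N, gam k (q ^ j)) * v ^ N := by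
    intro v f N hv
    calc ∏ j ∈ Finset.range N, f j
        = ∏ j ∈ Finset.range N, (gam k (q ^ j) * v) :=
          Finset.prod_congr rfl (fun j _ => hv j)
      _ = (∏ j ∈ Finset.range N, gam k (q ^ j)) * v ^ N := by
          rw [Finset.prod_mul_distrib, Finset.prod_const, Finset.card_range]
  rw [qBern,
    hprod (Real.sin (x - (k:ℝ) * Real.pi / 2)) _ i (fun j => dq_left k x (q ^ j)),
    hprod (Real.cos (x - (k:ℝ) * Real.pi / 2)) _ (n - i) (fun j => dq_right k x (q ^ j)),
    hprod 1 _ n (fun j => by rw [dq_ab]; ring),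
    Cst]
  rw [one_pow]
  ring

/-! ### Main sampled-values lemma for the trigonometric system -/

lemma main (n : ℕ) (A : ℕ → ℝ) (m : ℕ) (t : Fin (m + 1) → ℝ) (htmono : StrictMono t)
    (ht0 : ∀ j, 0 ≤ t j) (htle : ∀ j, t j ≤ Real.pi / 2) (v : Fin (m + 1) → ℝ)
    (hval : ∀ j, v j = ∑ i ∈ Finset.range (n + 1),
      A i * Real.sin (t j) ^ i * Real.cos (t j) ^ (n - i)) :
    strictSignChanges (List.ofFn v) ≤ (posRoots (Qp A n)).card := by
  classical
  by_cases hP : Qp A n = 0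
  · have hA0 : ∀ i, i < n + 1 → A i = 0 := by
      intro i hi
      have h1 := Qp_coeff A n i hi
      rw [hP, coeff_zero] at h1
      exact h1.symm
    have hz : ∀ y ∈ List.ofFn v, y = 0 := by
      intro y hy
      rw [List.mem_ofFn] at hy
      obtain ⟨j, rfl⟩ := hy
      rw [hval j]
      apply Finset.sum_eq_zero
      intro i hi
      rw [Finset.mem_range] at hi
      rw [hA0 i hi, zero_mul, zero_mul]
    rw [ssc_zero hz]
    exact Nat.zero_le _
  have hcos_pos : ∀ j : Fin (m + 1), t j < Real.pi / 2 → 0 < Real.cos (t j) := by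
    intro j hj
    exact Real.cos_pos_of_mem_Ioo ⟨by linarith [ht0 j, Real.pi_pos], hj⟩
  have hvariant : ∀ j : Fin (m + 1), t j < Real.pi / 2 →
      v j = Real.cos (t j) ^ n * (Qp A n).eval (Real.tan (t j)) := by
    intro j hj
    have hcj : 0 < Real.cos (t j) := hcos_pos j hj
    rw [hval j, eval_Qp, Finset.mul_sum]
    apply Finset.sum_congr rfl
    intro i hi
    rw [Finset.mem_range] at hi
    rw [Real.tan_eq_sin_div_cos, div_pow]
    have hsplit : Real.cos (t j) ^ n = Real.cos (t j) ^ i * Real.cos (t j) ^ (n - i) := by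
      rw [← pow_add]; congr 1; omega
    rw [hsplit]
    have hne : Real.cos (t j) ^ i ≠ 0 := pow_ne_zero _ (ne_of_gt hcj)
    field_simp
  have htan_mono : ∀ (i j : Fin (m + 1)), i < j → t j < Real.pi / 2 →
      Real.tan (t i) < Real.tan (t j) := by
    intro i j hij hj
    exact Real.strictMonoOn_tan ⟨by linarith [ht0 i, Real.pi_pos], by linarith [htmono hij]⟩
      ⟨by linarith [ht0 j, Real.pi_pos], hj⟩ (htmono hij)
  have htan_nonneg : ∀ j, 0 ≤ Real.tan (t j) :=
    fun j => Real.tan_nonneg_of_nonneg_of_le_pi_div_two (ht0 j) (htle j)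
  by_cases hlast : t (Fin.last m) < Real.pi / 2
  · have hall : ∀ j, t j < Real.pi / 2 := fun j =>
      lt_of_le_of_lt (htmono.monotone (Fin.le_last j)) hlast
    apply vals_le n A hP m v (fun j => Real.tan (t j))
      (fun i j hij => htan_mono i j hij (hall j)) htan_nonneg
    intro j
    rw [hvariant j (hall j)]
    exact SS_of_pos_mul (pow_pos (hcos_pos j (hall j)) n)
  · have hteq : t (Fin.last m) = Real.pi / 2 := le_antisymm (htle _) (not_lt.mp hlast)
    have hjlt : ∀ j : Fin (m + 1), j ≠ Fin.last m → t j < Real.pi / 2 := by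
      intro j hj
      have h1 : j < Fin.last m := lt_of_le_of_ne (Fin.le_last j) hj
      exact hteq ▸ htmono h1
    have hvlast : v (Fin.last m) = A n := by
      rw [hval, hteq, Finset.sum_eq_single n]
      · simp
      · intro i hi hne
        rw [Finset.mem_range] at hi
        rw [Real.cos_pi_div_two, zero_pow (by omega : n - i ≠ 0), mul_zero]
      · intro h
        exact absurd (Finset.mem_range.mpr (by omega)) h
    by_cases hAn : A n = 0
    · rw [List.ofFn_succ' v, List.concat_eq_append, hvlast, hAn, ssc_concat_zero]
      cases m with
      | zero =>
        rw [ssc_zero (l := List.ofFn fun j : Fin 0 => v j.castSucc) (by simp)]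
        exact Nat.zero_le _
      | succ m' =>
        apply vals_le n A hP m' (fun j => v j.castSucc) (fun j => Real.tan (t j.castSucc))
        · intro i j hij
          exact htan_mono _ _ (by exact_mod_cast Fin.castSucc_lt_castSucc_iff.mpr hij)
            (hjlt _ (Fin.castSucc_lt_last j).ne)
        · intro j
          exact htan_nonneg _
        · intro j
          have hji := hjlt j.castSucc (Fin.castSucc_lt_last j).ne
          rw [hvariant _ hji]
          exact SS_of_pos_mul (pow_pos (hcos_pos _ hji) n)
    · obtain ⟨U, hBU, hU0, hSSU⟩ := exists_large_sign A n hAn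
        (Finset.univ.sup' Finset.univ_nonempty (fun j : Fin (m + 1) => Real.tan (t j)))
      set us : Fin (m + 1) → ℝ := fun j => if j = Fin.last m then U else Real.tan (t j) with hus
      have husmono : StrictMono us := by
        intro i j hij
        have hine : i ≠ Fin.last m := ne_of_lt (lt_of_lt_of_le hij (Fin.le_last j))
        rw [hus]
        simp only
        rw [if_neg hine]
        by_cases hjl : j = Fin.last m
        · rw [if_pos hjl]
          calc Real.tan (t i) ≤ _ := Finset.le_sup' (fun j => Real.tan (t j)) (Finset.mem_univ i)
            _ < U := hBU
        · rw [if_neg hjl]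
          exact htan_mono i j hij (hjlt j hjl)
      apply vals_le n A hP m v us husmono
      · intro j
        rw [hus]
        simp only
        by_cases hjl : j = Fin.last m
        · rw [if_pos hjl]; exact hU0.le
        · rw [if_neg hjl]; exact htan_nonneg j
      · intro j
        rw [hus]
        simp only
        by_cases hjl : j = Fin.last m
        · rw [if_pos hjl, hjl, hvlast]
          exact hSSU.symm'
        · rw [if_neg hjl, hvariant j (hjlt j hjl)]
          exact SS_of_pos_mul (pow_pos (hcos_pos j (hjlt j hjl)) n)

end VD

/-- Variation diminishing (Corollary 1): the number of strict sign changes of a quantum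
trigonometric Bézier curve with scalar control points, sampled at increasing points of
`[kπ/2, (k+1)π/2]`, is at most the number of strict sign changes of its control points,
hence `S⁻(P) ≤ S⁻(b₀,…,bₙ)`. -/
theorem bezier_variation_diminishing (n : ℕ) (q : ℝ) (hq : 0 < q) (k : ℤ)
    (bp : Fin (n + 1) → ℝ) (m : ℕ) (x : Fin (m + 1) → ℝ) (hx : StrictMono x)
    (hxI : ∀ j, x j ∈ Set.Icc ((k : ℝ) * Real.pi / 2) (((k : ℝ) + 1) * Real.pi / 2)) :
    strictSignChanges (List.ofFn fun j : Fin (m + 1) =>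
        ∑ i : Fin (n + 1),
          bp i * qBern q ((k : ℝ) * Real.pi / 2) (((k : ℝ) + 1) * Real.pi / 2) n i (x j)) ≤
      strictSignChanges (List.ofFn bp) := by
  classical
  have hpi := Real.pi_pos
  set A : ℕ → ℝ := fun i => if h : i < n + 1 then VD.Cst q k n i * bp ⟨i, h⟩ else 0 with hA
  have hAi : ∀ i : Fin (n + 1), A (i : ℕ) = VD.Cst q k n (i : ℕ) * bp i := by
    intro i
    rw [hA]
    simp only [i.is_lt, dif_pos, Fin.eta]
  have hval : ∀ j : Fin (m + 1),
      (∑ i : Fin (n + 1),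
        bp i * qBern q ((k : ℝ) * Real.pi / 2) (((k : ℝ) + 1) * Real.pi / 2) n i (x j))
      = ∑ i ∈ Finset.range (n + 1),
          A i * Real.sin (x j - (k : ℝ) * Real.pi / 2) ^ i
            * Real.cos (x j - (k : ℝ) * Real.pi / 2) ^ (n - i) := by
    intro j
    rw [← Fin.sum_univ_eq_sum_range (fun i => A i * Real.sin (x j - (k : ℝ) * Real.pi / 2) ^ i
      * Real.cos (x j - (k : ℝ) * Real.pi / 2) ^ (n - i)) (n + 1)]
    apply Finset.sum_congr rfl
    intro i _
    rw [VD.qBern_eq hq k n (i : ℕ) (x j), hAi i]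
    ring
  have hmain := VD.main n A m (fun j => x j - (k : ℝ) * Real.pi / 2)
    (fun i j hij => sub_lt_sub_right (hx hij) _)
    (fun j => sub_nonneg.mpr (hxI j).1)
    (fun j => by
      have h2 := (hxI j).2
      show x j - (k : ℝ) * Real.pi / 2 ≤ Real.pi / 2
      linarith)
    (fun j => ∑ i : Fin (n + 1),
      bp i * qBern q ((k : ℝ) * Real.pi / 2) (((k : ℝ) + 1) * Real.pi / 2) n i (x j))
    (fun j => hval j)
  refine hmain.trans ?_
  refine (VD.descartes n A).trans (le_of_eq ?_)
  rw [VD.map_range_eq_ofFn]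
  apply VD.strictSignChanges_congr
  apply VD.forall2_ofFn
  intro i
  rw [hAi i]
  exact VD.SS_of_pos_mul (VD.Cst_pos hq k n i)
end
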